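/- Let Σ be a complete simplicial fan in a rational vector space N_ℚ of dimension d, let c ∈ N be a lattice element (N a finitely generated abelian group with N̄ its image in N_ℚ), and let σ be the minimal cone of Σ containing the image c̄ of c. Fix lattice elements b_i ∈ N with b̄_i generating the rays ρ_i of Σ. Then there is a unique expression c = v + Σ_{ρ_i ⊆ σ} m_i b_i with m_i nonnegative integers and v ∈ Box(σ), i.e. v̄ = Σ_{ρ_i ⊆ σ} a_i b̄_i with 0 ≤ a_i < 1. -/
import Mathlib


/-- `x` lies in the cone spanned by the rays indexed by `σ`,
with ray generators `bbar`. -/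
def InCone {n d : ℕ} (bbar : Fin n → (Fin d → ℚ)) (σ : Finset (Fin n))
    (x : Fin d → ℚ) : Prop :=
  ∃ a : Fin n → ℚ, (∀ i, 0 ≤ a i) ∧ (∀ i ∉ σ, a i = 0) ∧ x = ∑ i, a i • bbar i

/-- `v ∈ Box(σ)`: the image of `v` in `N_ℚ` is `Σ_{ρ_i ⊆ σ} a_i b̄_i`
with `0 ≤ a_i < 1`. -/
def InBox {N : Type} [AddCommGroup N] {n d : ℕ} (π : N →+ (Fin d → ℚ))
    (bbar : Fin n → (Fin d → ℚ)) (σ : Finset (Fin n)) (v : N) : Prop :=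
  ∃ a : Fin n → ℚ, (∀ i, 0 ≤ a i ∧ a i < 1) ∧ (∀ i ∉ σ, a i = 0) ∧
    π v = ∑ i, a i • bbar i

lemma coeff_eq {n d : ℕ} (bbar : Fin n → (Fin d → ℚ)) (σ : Finset (Fin n))
    (hli : LinearIndependent ℚ (fun i : σ => bbar i))
    (c c' : Fin n → ℚ) (h0 : ∀ i ∉ σ, c i = 0) (h0' : ∀ i ∉ σ, c' i = 0)
    (h : ∑ i, c i • bbar i = ∑ i, c' i • bbar i) : c = c' := by
  have key : ∀ g : Fin n → ℚ, (∀ i ∉ σ, g i = 0) →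
      ∑ i, g i • bbar i = ∑ i : σ, g i • bbar i := by
    intro g hg
    rw [← Finset.sum_subset (Finset.subset_univ σ)
      (fun i _ hi => by rw [hg i hi, zero_smul])]
    rw [← Finset.sum_attach σ (fun i => g i • bbar i)]; rfl
  have h2 : ∑ i : σ, (c i - c' i) • bbar i = 0 := by
    simp only [sub_smul, Finset.sum_sub_distrib]
    rw [← key c h0, ← key c' h0', h, sub_self]
  have := Fintype.linearIndependent_iff.mp hli (fun i => c i - c' i) h2
  funext i
  by_cases hi : i ∈ σ
  · have := this ⟨i, hi⟩
    linarith [sub_eq_zero.mp this]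
  · rw [h0 i hi, h0' i hi]

lemma pi_sum_smul {N : Type} [AddCommGroup N] {n d : ℕ} (π : N →+ (Fin d → ℚ))
    (b : Fin n → N) (m : Fin n → ℤ) :
    π (∑ i, m i • b i) = ∑ i, (m i : ℚ) • π (b i) := by
  rw [map_sum]
  exact Finset.sum_congr rfl fun i _ => by
    rw [map_zsmul, Int.cast_smul_eq_zsmul]

/-- Unique expression `c = v + Σ_{ρ_i ⊆ σ} m_i b_i` with `v ∈ Box(σ)` and
`m_i ∈ ℕ`, where `σ` is the minimal cone of the complete simplicial fan `𝒞`
containing the image `c̄` of `c`. -/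
theorem stmt_2 {N : Type} [AddCommGroup N] [AddGroup.FG N] {n d : ℕ}
    (π : N →+ (Fin d → ℚ)) (b : Fin n → N)
    (𝒞 : Set (Finset (Fin n)))
    (hfaces : ∀ σ ∈ 𝒞, ∀ τ ⊆ σ, τ ∈ 𝒞)
    (hsimp : ∀ σ ∈ 𝒞, LinearIndependent ℚ (fun i : σ => π (b i)))
    (hcomplete : ∀ x : Fin d → ℚ, ∃ σ ∈ 𝒞, InCone (fun i => π (b i)) σ x)
    (σ : Finset (Fin n)) (hσ : σ ∈ 𝒞) (c : N)
    (hc : InCone (fun i => π (b i)) σ (π c))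
    (hmin : ∀ τ ∈ 𝒞, InCone (fun i => π (b i)) τ (π c) → σ ⊆ τ) :
    ∃! p : N × (Fin n → ℕ),
      InBox π (fun i => π (b i)) σ p.1 ∧ (∀ i ∉ σ, p.2 i = 0) ∧
      c = p.1 + ∑ i, (p.2 i : ℤ) • b i := by
  obtain ⟨a, ha0, haσ, hasum⟩ := hc
  set m : Fin n → ℕ := fun i => (⌊a i⌋).toNat with hm
  have hmcast : ∀ i, ((m i : ℤ) : ℚ) = (⌊a i⌋ : ℚ) := by
    intro i
    rw [hm]
    simp [Int.toNat_of_nonneg (Int.floor_nonneg.mpr (ha0 i))]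
  set v : N := c - ∑ i, (m i : ℤ) • b i with hv
  have hπv : π v = ∑ i, Int.fract (a i) • π (b i) := by
    rw [hv, map_sub, pi_sum_smul, hasum, ← Finset.sum_sub_distrib]
    refine Finset.sum_congr rfl fun i _ => ?_
    rw [← sub_smul, hmcast i, Int.fract]
  refine ⟨(v, m), ⟨⟨fun i => Int.fract (a i),
      fun i => ⟨Int.fract_nonneg _, Int.fract_lt_one _⟩,
      fun i hi => by simp only []; rw [haσ i hi]; simp, hπv⟩,
      fun i hi => by rw [hm]; simp [haσ i hi],
      by simp only [hv]; abel⟩, ?_⟩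
  rintro ⟨w, k⟩ ⟨⟨a', ha', ha'σ, hw⟩, hkσ, hck⟩
  dsimp only at hw hkσ hck
  -- coefficients of π c in two ways
  have hπc : (fun i => a' i + (k i : ℚ)) = fun i => Int.fract (a i) + (m i : ℚ) := by
    apply coeff_eq (fun i => π (b i)) σ (hsimp σ hσ)
    · intro i hi; rw [ha'σ i hi, hkσ i hi]; simp
    · intro i hi
      rw [haσ i hi, hm]
      simp [haσ i hi]
    · have h1 : π c = ∑ i, (a' i + (k i : ℚ)) • π (b i) := by
        rw [hck, map_add, hw, pi_sum_smul, ← Finset.sum_add_distrib]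
        refine Finset.sum_congr rfl fun i _ => ?_
        rw [← add_smul]
        norm_num
      have h2 : π c = ∑ i, (Int.fract (a i) + (m i : ℚ)) • π (b i) := by
        have hstep : π c = π v + ∑ i, ((m i : ℤ) : ℚ) • π (b i) := by
          rw [← pi_sum_smul, ← map_add]
          congr 1
          simp only [hv]; abel
        rw [hstep, hπv, ← Finset.sum_add_distrib]
        refine Finset.sum_congr rfl fun i _ => ?_
        rw [← add_smul]
        norm_num
      rw [← h1, ← h2]
  have hkm : k = m := by
    funext i
    have heq := congrFun hπc i
    have h1 := (ha' i).1
    have h2 := (ha' i).2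
    have h3 := Int.fract_nonneg (a i)
    have h4 := Int.fract_lt_one (a i)
    have : (k i : ℚ) = (m i : ℚ) := by
      have hint : ((k i : ℤ) : ℚ) - ((m i : ℤ) : ℚ) = ((k i - m i : ℤ) : ℚ) := by
        push_cast; ring
      have hlt : |((k i - m i : ℤ) : ℚ)| < 1 := by
        rw [← hint]
        rw [abs_lt]
        constructor <;> push_cast <;> push_cast at heq <;> linarith
      have hz : (k i - m i : ℤ) = 0 := by
        rw [← Int.abs_lt_one_iff]
        exact_mod_cast hlt
      have : ((k i : ℤ) : ℚ) = ((m i : ℤ) : ℚ) := by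
        have := sub_eq_zero.mp hz
        exact_mod_cast this
      exact_mod_cast this
    exact_mod_cast this
  subst hkm
  have hwv : w = v := by
    rw [hv]
    have := hck
    rw [this]; abel
  rw [hwv]
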